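/- Let σ₁, σ₂ > 0 and a ∈ ℝ, and define Φ₀(λ) = σ₁⁻¹·√λ·sin(σ₁·√λ)·(cos(σ₂·√λ) + a) for λ ∈ ℂ, where √λ is the principal square root. Then there exist constants C₁ > 0 and T ≥ 1 such that for every real t with |t| ≥ T, |Φ₀(it)| ≥ C₁·√|t|·exp((σ₁ + σ₂)·|Im √(it)|). -/

import Mathlib

/-!
Write `z = √(it)`, so that `|z| = √|t|` and `|Im z| = √(|t|/2) → ∞`. For `|Im w|` large,
`sin w` and `cos w + a` both have size at least `e^{|Im w|}/4`, because `|sin w|` and `|cos w|`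
dominate `sinh |Im w|`. Multiplying the bounds for `w = σ₁z` and `w = σ₂z` gives the exponent
`(σ₁ + σ₂)|Im z|`.
-/

open Complex Filter

lemma Real.exp_sub_one_le_two_mul_sinh {x : ℝ} (hx : 0 ≤ x) : Real.exp x - 1 ≤ 2 * Real.sinh x := by
  have : Real.exp (-x) ≤ 1 := Real.exp_le_one_iff.2 (neg_nonpos.2 hx)
  rw [Real.sinh_eq]
  linarith

namespace Complex

lemma sinh_abs_im_le_norm_sin (w : ℂ) : Real.sinh |w.im| ≤ ‖sin w‖ :=
  calc Real.sinh |w.im| = |‖exp (-w * I)‖ - ‖exp (w * I)‖| / 2 := by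
        rw [← Real.abs_sinh, Real.sinh_eq, norm_exp, norm_exp, abs_div]
        simp
    _ ≤ ‖exp (-w * I) - exp (w * I)‖ / 2 := by gcongr; exact abs_norm_sub_norm_le _ _
    _ = ‖sin w‖ := by simp [sin]

lemma sinh_abs_im_le_norm_cos (w : ℂ) : Real.sinh |w.im| ≤ ‖cos w‖ := by
  simpa [sin_add_pi_div_two] using sinh_abs_im_le_norm_sin (w + (Real.pi / 2 : ℝ))

lemma exp_abs_im_div_four_le_norm_sin {w : ℂ} (h : 2 ≤ Real.exp |w.im|) :
    Real.exp |w.im| / 4 ≤ ‖sin w‖ := by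
  have := Real.exp_sub_one_le_two_mul_sinh (abs_nonneg w.im)
  linarith [sinh_abs_im_le_norm_sin w]

lemma exp_abs_im_div_four_le_norm_cos_add {w : ℂ} (c : ℂ) (h : 4 * ‖c‖ + 2 ≤ Real.exp |w.im|) :
    Real.exp |w.im| / 4 ≤ ‖cos w + c‖ := by
  have := Real.exp_sub_one_le_two_mul_sinh (abs_nonneg w.im)
  have : ‖cos w‖ - ‖c‖ ≤ ‖cos w + c‖ := by simpa using norm_sub_norm_le (cos w) (-c)
  linarith [sinh_abs_im_le_norm_cos w]

lemma norm_I_mul_ofReal_cpow_half (t : ℝ) : ‖(I * t) ^ (1 / 2 : ℂ)‖ = √|t| := by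
  rw [show (1 / 2 : ℂ) = ((1 / 2 : ℝ) : ℂ) by norm_num, norm_cpow_real, Real.sqrt_eq_rpow]
  simp

lemma abs_im_I_mul_ofReal_cpow_half (t : ℝ) : |((I * t) ^ (1 / 2 : ℂ)).im| = √(|t| / 2) := by
  rw [one_div, abs_cpow_inv_two_im]
  simp

lemma tendsto_abs_im_I_mul_ofReal_cpow_half :
    Tendsto (fun t : ℝ ↦ |((I * t) ^ (1 / 2 : ℂ)).im|) (comap (|·|) atTop) atTop := by
  simp only [abs_im_I_mul_ofReal_cpow_half]
  exact Real.tendsto_sqrt_atTop.comp (tendsto_comap.atTop_div_const two_pos)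

end Complex

lemma Filter.Eventually.exists_one_le_forall_le_abs {P : ℝ → Prop}
    (h : ∀ᶠ t in Filter.comap (|·|) atTop, P t) : ∃ T : ℝ, 1 ≤ T ∧ ∀ t : ℝ, T ≤ |t| → P t := by
  obtain ⟨T, hT⟩ := eventually_atTop.1 (eventually_comap.1 h)
  exact ⟨max T 1, le_max_right _ _, fun t ht ↦ hT _ (le_of_max_le_left ht) t rfl⟩

/-- Lower bound `|Φ₀(it)| ≥ C₁ √|t| e^{(σ₁+σ₂)|Im √(it)|}` for the model function
`Φ₀(λ) = σ₁⁻¹ √λ sin(σ₁√λ)(cos(σ₂√λ) + a)` on the imaginary axis. -/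
theorem model_function_lower_bound
    (σ₁ σ₂ : ℝ) (hσ₁ : 0 < σ₁) (hσ₂ : 0 < σ₂) (a : ℝ) :
    ∃ C₁ : ℝ, 0 < C₁ ∧ ∃ T : ℝ, 1 ≤ T ∧ ∀ t : ℝ, T ≤ |t| →
      C₁ * Real.sqrt |t| * Real.exp ((σ₁ + σ₂) * |((I * (t : ℂ)) ^ (1/2 : ℂ)).im|) ≤
        ‖(σ₁ : ℂ)⁻¹ * (I * (t : ℂ)) ^ (1/2 : ℂ) *
            Complex.sin ((σ₁ : ℂ) * (I * (t : ℂ)) ^ (1/2 : ℂ)) *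
            (Complex.cos ((σ₂ : ℂ) * (I * (t : ℂ)) ^ (1/2 : ℂ)) + (a : ℂ))‖ := by
  have hexp {σ : ℝ} (hσ : 0 < σ) (c : ℝ) : ∀ᶠ t : ℝ in comap (|·|) atTop,
      c ≤ Real.exp |((σ : ℂ) * (I * t) ^ (1 / 2 : ℂ)).im| := by
    simp only [im_ofReal_mul, abs_mul, abs_of_pos hσ]
    exact (Real.tendsto_exp_atTop.comp
      (tendsto_abs_im_I_mul_ofReal_cpow_half.const_mul_atTop hσ)).eventually_ge_atTop c
  obtain ⟨T, hT1, hT⟩ := ((hexp hσ₁ 2).and (hexp hσ₂ (4 * ‖(a : ℂ)‖ + 2))).exists_one_le_forall_le_abs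
  refine ⟨σ₁⁻¹ / 16, by positivity, T, hT1, fun t ht ↦ ?_⟩
  obtain ⟨hsin, hcos⟩ := hT t ht
  have hsin := exp_abs_im_div_four_le_norm_sin hsin
  have hcos := exp_abs_im_div_four_le_norm_cos_add _ hcos
  simp only [im_ofReal_mul, abs_mul, abs_of_pos hσ₁, abs_of_pos hσ₂] at hsin hcos
  rw [norm_mul, norm_mul, norm_mul, norm_inv, norm_real, Real.norm_of_nonneg hσ₁.le,
    norm_I_mul_ofReal_cpow_half, add_mul, Real.exp_add]
  calc σ₁⁻¹ / 16 * √|t| * (Real.exp (σ₁ * _) * Real.exp (σ₂ * _))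
      = σ₁⁻¹ * √|t| * (Real.exp (σ₁ * _) / 4 * (Real.exp (σ₂ * _) / 4)) := by ring
    _ ≤ σ₁⁻¹ * √|t| * (‖sin (σ₁ * _)‖ * ‖cos (σ₂ * _) + a‖) := by gcongr
    _ = _ := by ring
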